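/- arXiv:2205.01442 — 2 statements merged into one kernel-verified Lean document; each statement's English description precedes it below -/
import Mathlib

section
/- Suppose φ̄ is concave-extendable from vert(Q) = Π_{i=1}^d {v_{i,0},…,v_{i,n}} as a function on Q, and the map (y_1,…,y_d) ↦ φ(y_1,…,y_d) is supermodular on the box Π_{i=1}^d [a_{i,0}, a_{i,n}]. Then for every s ∈ Q, conc_Q(φ̄)(s) = min_{ω ∈ Ω} B̂^ω(φ)(s;a), where the minimum is over the set Ω of all direction vectors. -/
open Finset

noncomputable section

/-- A direction vector: each value `i ∈ {1,…,d}` occurs exactly `n` times. -/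
def IsDirVec (d n : ℕ) (ω : Fin (d * n) → Fin d) : Prop :=
  ∀ i : Fin d, (Finset.univ.filter (fun t => ω t = i)).card = n

/-- The grid point reached after the first `t` moves of the staircase determined by `ω`. -/
def gridPt (d n : ℕ) (ω : Fin (d * n) → Fin d) (t : ℕ) (i : Fin d) : ℕ :=
  (Finset.univ.filter (fun t' : Fin (d * n) => (t' : ℕ) < t ∧ ω t' = i)).card

/-- Coercion of a natural number `k ≤ n` into `Fin (n+1)`. -/
def toIdx (n k : ℕ) : Fin (n + 1) := ⟨min k n, Nat.lt_succ_of_le (Nat.min_le_right k n)⟩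

/-- The vertex `v_{i,j}` of the simplex `Q_i` : its `k`-th entry is `a_{i,min(j,k)}`. -/
def vvec (d n : ℕ) (a : Fin d → Fin (n + 1) → ℝ) (i : Fin d) (j : Fin (n + 1)) :
    Fin (n + 1) → ℝ :=
  fun k => a i (min j k)

/-- The simplotope `Q = Q_1 × ⋯ × Q_d`. -/
def Qset (d n : ℕ) (a : Fin d → Fin (n + 1) → ℝ) : Set (Fin d → Fin (n + 1) → ℝ) :=
  {s | ∀ i, s i ∈ convexHull ℝ {w | ∃ j, w = vvec d n a i j}}

/-- The vertex set of `Q`. -/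
def vertQ (d n : ℕ) (a : Fin d → Fin (n + 1) → ℝ) : Set (Fin d → Fin (n + 1) → ℝ) :=
  {s | ∀ i, ∃ j, s i = vvec d n a i j}

/-- `φ̄(s) = φ(s_{1,n},…,s_{d,n})`. -/
def phibar (d n : ℕ) (φ : (Fin d → ℝ) → ℝ) : (Fin d → Fin (n + 1) → ℝ) → ℝ :=
  fun s => φ (fun i => s i (Fin.last n))

/-- The concave envelope of `g` over `S`, evaluated at `x`. -/
def concEnv {E : Type*} [AddCommMonoid E] [Module ℝ E] (S : Set E) (g : E → ℝ) (x : E) : ℝ :=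
  sSup {r : ℝ | ∃ (k : ℕ) (lam : Fin k → ℝ) (y : Fin k → E),
    (∀ idx, 0 ≤ lam idx) ∧ ∑ idx, lam idx = 1 ∧ (∀ idx, y idx ∈ S) ∧
    ∑ idx, lam idx • y idx = x ∧ r = ∑ idx, lam idx * g (y idx)}

/-- The affine interpolant `B̂^ω(φ)(s;a)`. -/
def Bhat (d n : ℕ) (φ : (Fin d → ℝ) → ℝ) (ω : Fin (d * n) → Fin d)
    (a s : Fin d → Fin (n + 1) → ℝ) : ℝ :=
  φ (fun i => a i (toIdx n (gridPt d n ω 0 i))) +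
    ∑ t : Fin (d * n),
      ((φ (fun i => a i (toIdx n (gridPt d n ω ((t : ℕ) + 1) i))) -
          φ (fun i => a i (toIdx n (gridPt d n ω (t : ℕ) i)))) /
          (a (ω t) (toIdx n (gridPt d n ω ((t : ℕ) + 1) (ω t))) -
            a (ω t) (toIdx n (gridPt d n ω (t : ℕ) (ω t))))) *
        (s (ω t) (toIdx n (gridPt d n ω ((t : ℕ) + 1) (ω t))) -
          s (ω t) (toIdx n (gridPt d n ω (t : ℕ) (ω t))))




-- toIdx lemmas
lemma toIdx_val {n k : ℕ} (h : k ≤ n) : ((toIdx n k : Fin (n+1)) : ℕ) = k := by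
  simp [toIdx, min_eq_left h]

lemma toIdx_zero (n : ℕ) : toIdx n 0 = 0 := by
  apply Fin.ext; simp [toIdx]

lemma toIdx_self (n : ℕ) : toIdx n n = Fin.last n := by
  apply Fin.ext; simp [toIdx]

lemma fin_min_val {n : ℕ} (x y : Fin (n+1)) : ((min x y : Fin (n+1)) : ℕ) = min (x : ℕ) (y : ℕ) := by
  rcases le_total x y with h | h
  · rw [min_eq_left h, min_eq_left (Fin.le_def.mp h)]
  · rw [min_eq_right h, min_eq_right (Fin.le_def.mp h)]

lemma fin_max_val {n : ℕ} (x y : Fin (n+1)) : ((max x y : Fin (n+1)) : ℕ) = max (x : ℕ) (y : ℕ) := by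
  rcases le_total x y with h | h
  · rw [max_eq_right h, max_eq_right (Fin.le_def.mp h)]
  · rw [max_eq_left h, max_eq_left (Fin.le_def.mp h)]

lemma toIdx_min (n x y : ℕ) : toIdx n (min x y) = min (toIdx n x) (toIdx n y) := by
  apply Fin.ext
  rw [fin_min_val]
  show min (min x y) n = min (min x n) (min y n)
  omega

lemma toIdx_max (n x y : ℕ) : toIdx n (max x y) = max (toIdx n x) (toIdx n y) := by
  apply Fin.ext
  rw [fin_max_val]
  show min (max x y) n = max (min x n) (min y n)
  omega

lemma toIdx_mono {n k k' : ℕ} (h : k ≤ k') : toIdx n k ≤ toIdx n k' := by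
  rw [Fin.le_def]; show min k n ≤ min k' n; omega

lemma toIdx_lt {n k k' : ℕ} (h : k < k') (h' : k' ≤ n) : toIdx n k < toIdx n k' := by
  rw [Fin.lt_def]; show min k n < min k' n; omega

-- gridPt lemmas
lemma gridPt_zero (d n : ℕ) (ω : Fin (d*n) → Fin d) (i : Fin d) : gridPt d n ω 0 i = 0 := by
  simp [gridPt]

lemma gridPt_mono (d n : ℕ) (ω : Fin (d*n) → Fin d) {t t' : ℕ} (h : t ≤ t') (i : Fin d) :
    gridPt d n ω t i ≤ gridPt d n ω t' i := by
  apply Finset.card_le_card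
  intro x hx
  simp only [Finset.mem_filter] at hx ⊢
  exact ⟨hx.1, lt_of_lt_of_le hx.2.1 h, hx.2.2⟩

lemma gridPt_le_n (d n : ℕ) {ω : Fin (d*n) → Fin d} (hω : IsDirVec d n ω) (t : ℕ) (i : Fin d) :
    gridPt d n ω t i ≤ n := by
  refine le_trans (Finset.card_le_card ?_) (le_of_eq (hω i))
  intro x hx
  simp only [Finset.mem_filter] at hx ⊢
  exact ⟨hx.1, hx.2.2⟩

lemma gridPt_total (d n : ℕ) {ω : Fin (d*n) → Fin d} (hω : IsDirVec d n ω) (i : Fin d) :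
    gridPt d n ω (d*n) i = n := by
  have : gridPt d n ω (d*n) i = (Finset.univ.filter (fun t => ω t = i)).card := by
    unfold gridPt
    congr 1
    apply Finset.filter_congr
    intro x _
    simp [x.isLt]
  rw [this]; exact hω i

lemma gridPt_succ (d n : ℕ) (ω : Fin (d*n) → Fin d) (t : Fin (d*n)) (i : Fin d) :
    gridPt d n ω ((t:ℕ)+1) i = gridPt d n ω t i + if ω t = i then 1 else 0 := by
  unfold gridPt
  have h1 : (univ.filter (fun t' : Fin (d*n) => (t':ℕ) < (t:ℕ)+1 ∧ ω t' = i))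
      = (univ.filter (fun t' : Fin (d*n) => (t':ℕ) < (t:ℕ) ∧ ω t' = i)) ∪
        (univ.filter (fun t' : Fin (d*n) => t' = t ∧ ω t' = i)) := by
    ext t'
    simp only [Finset.mem_filter, Finset.mem_union, Finset.mem_univ, true_and]
    constructor
    · rintro ⟨h, h2⟩
      rcases Nat.lt_succ_iff_lt_or_eq.mp h with h | h
      · exact Or.inl ⟨h, h2⟩
      · exact Or.inr ⟨Fin.ext h, h2⟩
    · rintro (⟨h, h2⟩ | ⟨h, h2⟩)
      · exact ⟨Nat.lt_succ_of_lt h, h2⟩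
      · subst h; exact ⟨Nat.lt_succ_self _, h2⟩
  rw [h1, Finset.card_union_of_disjoint]
  · congr 1
    have h2 : (univ.filter (fun t' : Fin (d*n) => t' = t ∧ ω t' = i))
        = if ω t = i then {t} else ∅ := by
      ext t'
      by_cases h : ω t = i
      · simp only [h, if_true, Finset.mem_filter, Finset.mem_univ, true_and,
          Finset.mem_singleton]
        constructor
        · rintro ⟨h1, _⟩; exact h1
        · rintro rfl; exact ⟨rfl, h⟩
      · simp only [h, if_false, Finset.mem_filter, Finset.mem_univ, true_and,
          Finset.notMem_empty, iff_false]
        rintro ⟨rfl, h2⟩; exact h h2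
    rw [h2]
    by_cases h : ω t = i <;> simp [h]
  · rw [Finset.disjoint_left]
    intro x hx hx2
    simp only [Finset.mem_filter] at hx hx2
    rcases hx2.2 with ⟨rfl, _⟩
    exact lt_irrefl _ hx.2.1

lemma gridPt_lt (d n : ℕ) {ω : Fin (d*n) → Fin d} (hω : IsDirVec d n ω) (t : Fin (d*n)) :
    gridPt d n ω t (ω t) < n := by
  refine lt_of_lt_of_le (Finset.card_lt_card ?_) (le_of_eq (hω (ω t)))
  rw [Finset.ssubset_iff_of_subset]
  · exact ⟨t, by simp, by simp⟩
  · intro x hx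
    simp only [Finset.mem_filter] at hx ⊢
    exact ⟨hx.1, hx.2.2⟩

-- supermodularity of gg
def gg (d n : ℕ) (φ : (Fin d → ℝ) → ℝ) (a : Fin d → Fin (n+1) → ℝ) (p : Fin d → ℕ) : ℝ :=
  φ (fun i => a i (toIdx n (p i)))

lemma gg_super (d n : ℕ) (a : Fin d → Fin (n+1) → ℝ) (ha : ∀ i, StrictMono (a i))
    (φ : (Fin d → ℝ) → ℝ)
    (hsuper : ∀ y ∈ Set.Icc (fun i => a i 0) (fun i => a i (Fin.last n)),
      ∀ z ∈ Set.Icc (fun i => a i 0) (fun i => a i (Fin.last n)),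
        φ y + φ z ≤ φ (y ⊔ z) + φ (y ⊓ z))
    (p q : Fin d → ℕ) :
    gg d n φ a p + gg d n φ a q ≤
      gg d n φ a (fun i => max (p i) (q i)) + gg d n φ a (fun i => min (p i) (q i)) := by
  have hmem : ∀ p : Fin d → ℕ, (fun i => a i (toIdx n (p i))) ∈
      Set.Icc (fun i => a i 0) (fun i => a i (Fin.last n)) := by
    intro p
    constructor
    · intro i; exact (ha i).monotone (Fin.zero_le _)
    · intro i; exact (ha i).monotone (Fin.le_last _)
  have h := hsuper _ (hmem p) _ (hmem q)
  have hsup : (fun i => a i (toIdx n (p i))) ⊔ (fun i => a i (toIdx n (q i)))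
      = fun i => a i (toIdx n (max (p i) (q i))) := by
    funext i
    rw [toIdx_max]
    exact ((ha i).monotone.map_max).symm
  have hinf : (fun i => a i (toIdx n (p i))) ⊓ (fun i => a i (toIdx n (q i)))
      = fun i => a i (toIdx n (min (p i) (q i))) := by
    funext i
    rw [toIdx_min]
    exact ((ha i).monotone.map_min).symm
  rw [hsup, hinf] at h
  exact h

def mu (d n : ℕ) (a s : Fin d → Fin (n+1) → ℝ) (i : Fin d) (k : ℕ) : ℝ :=
  (s i (toIdx n (k+1)) - s i (toIdx n k)) / (a i (toIdx n (k+1)) - a i (toIdx n k))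

lemma da_pos {d n : ℕ} {a : Fin d → Fin (n+1) → ℝ} (ha : ∀ i, StrictMono (a i))
    (i : Fin d) {k : ℕ} (hk : k < n) :
    0 < a i (toIdx n (k+1)) - a i (toIdx n k) :=
  sub_pos.mpr (ha i (toIdx_lt (Nat.lt_succ_self k) hk))

/-- The convex superset capturing the linear facts we need about `Q_i`. -/
def Ci (n : ℕ) (ai : Fin (n+1) → ℝ) : Set (Fin (n+1) → ℝ) :=
  {w | w 0 = ai 0 ∧
    (∀ k : ℕ, k < n → 0 ≤ w (toIdx n (k+1)) - w (toIdx n k)) ∧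
    (∀ k : ℕ, k < n → w (toIdx n (k+1)) - w (toIdx n k) ≤ ai (toIdx n (k+1)) - ai (toIdx n k)) ∧
    (∀ k : ℕ, k + 1 < n →
      (w (toIdx n (k+2)) - w (toIdx n (k+1))) * (ai (toIdx n (k+1)) - ai (toIdx n k)) ≤
      (w (toIdx n (k+1)) - w (toIdx n k)) * (ai (toIdx n (k+2)) - ai (toIdx n (k+1))))}

lemma Ci_convex (n : ℕ) (ai : Fin (n+1) → ℝ) : Convex ℝ (Ci n ai) := by
  intro w1 h1 w2 h2 α β hα hβ hαβ
  obtain ⟨e1, p1, q1, r1⟩ := h1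
  obtain ⟨e2, p2, q2, r2⟩ := h2
  have happ : ∀ κ : Fin (n+1), (α • w1 + β • w2) κ = α * w1 κ + β * w2 κ := by
    intro κ; simp [Pi.add_apply, Pi.smul_apply, smul_eq_mul]
  refine ⟨?_, ?_, ?_, ?_⟩
  · rw [happ, e1, e2]; linear_combination ai 0 * hαβ
  · intro k hk
    rw [happ, happ]
    have A1 := p1 k hk; have A2 := p2 k hk
    nlinarith [mul_le_mul_of_nonneg_left A1 hα, mul_le_mul_of_nonneg_left A2 hβ]
  · intro k hk
    rw [happ, happ]
    have A1 := q1 k hk; have A2 := q2 k hk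
    have B1 := mul_le_mul_of_nonneg_left A1 hα
    have B2 := mul_le_mul_of_nonneg_left A2 hβ
    have h3 : α * (ai (toIdx n (k+1)) - ai (toIdx n k)) + β * (ai (toIdx n (k+1)) - ai (toIdx n k))
        = ai (toIdx n (k+1)) - ai (toIdx n k) := by
      linear_combination (ai (toIdx n (k+1)) - ai (toIdx n k)) * hαβ
    linarith
  · intro k hk
    rw [happ, happ, happ]
    have h1' := r1 k hk; have h2' := r2 k hk
    nlinarith

lemma vvec_diff {d n : ℕ} (a : Fin d → Fin (n+1) → ℝ)
    (i : Fin d) (j : Fin (n+1)) {k : ℕ} (hk : k < n) :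
    vvec d n a i j (toIdx n (k+1)) - vvec d n a i j (toIdx n k)
      = if k < (j : ℕ) then a i (toIdx n (k+1)) - a i (toIdx n k) else 0 := by
    unfold vvec
    by_cases hj : k < (j : ℕ)
    · rw [if_pos hj]
      have h1 : min j (toIdx n (k+1)) = toIdx n (k+1) := by
        apply min_eq_right
        rw [Fin.le_def, toIdx_val (by omega)]
        omega
      have h2 : min j (toIdx n k) = toIdx n k := by
        apply min_eq_right
        rw [Fin.le_def, toIdx_val (by omega)]
        omega
      rw [h1, h2]
    · rw [if_neg hj]
      have h1 : min j (toIdx n (k+1)) = j := by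
        apply min_eq_left
        rw [Fin.le_def, toIdx_val (by omega)]
        omega
      have h2 : min j (toIdx n k) = j := by
        apply min_eq_left
        rw [Fin.le_def, toIdx_val (by omega)]
        omega
      rw [h1, h2, sub_self]

lemma vvec_mem_Ci {d n : ℕ} {a : Fin d → Fin (n+1) → ℝ} (ha : ∀ i, StrictMono (a i))
    (i : Fin d) (j : Fin (n+1)) : vvec d n a i j ∈ Ci n (a i) := by
  have key : ∀ k : ℕ, k < n →
      vvec d n a i j (toIdx n (k+1)) - vvec d n a i j (toIdx n k)
        = if k < (j : ℕ) then a i (toIdx n (k+1)) - a i (toIdx n k) else 0 :=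
    fun k hk => vvec_diff a i j hk
  refine ⟨?_, ?_, ?_, ?_⟩
  · unfold vvec
    rw [min_eq_right (Fin.zero_le j)]
  · intro k hk
    rw [key k hk]
    by_cases hj : k < (j : ℕ)
    · rw [if_pos hj]; exact le_of_lt (da_pos ha i hk)
    · rw [if_neg hj]
  · intro k hk
    rw [key k hk]
    by_cases hj : k < (j : ℕ)
    · rw [if_pos hj]
    · rw [if_neg hj]; exact le_of_lt (da_pos ha i hk)
  · intro k hk
    rw [key k (by omega), key (k+1) hk]
    by_cases hj2 : k + 1 < (j : ℕ)
    · rw [if_pos hj2, if_pos (by omega)]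
      exact le_of_eq (mul_comm _ _)
    · rw [if_neg hj2, zero_mul]
      by_cases hj1 : k < (j : ℕ)
      · rw [if_pos hj1]
        exact mul_nonneg (le_of_lt (da_pos ha i (by omega))) (le_of_lt (da_pos ha i hk))
      · rw [if_neg hj1, zero_mul]

lemma s_mem_Ci {d n : ℕ} {a : Fin d → Fin (n+1) → ℝ} (ha : ∀ i, StrictMono (a i))
    {s : Fin d → Fin (n+1) → ℝ} (hs : s ∈ Qset d n a) (i : Fin d) : s i ∈ Ci n (a i) := by
  refine convexHull_min ?_ (Ci_convex n (a i)) (hs i)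
  rintro w ⟨j, rfl⟩
  exact vvec_mem_Ci ha i j

lemma s_zero {d n : ℕ} {a : Fin d → Fin (n+1) → ℝ} (ha : ∀ i, StrictMono (a i))
    {s : Fin d → Fin (n+1) → ℝ} (hs : s ∈ Qset d n a) (i : Fin d) : s i 0 = a i 0 :=
  (s_mem_Ci ha hs i).1

lemma mu_nonneg {d n : ℕ} {a : Fin d → Fin (n+1) → ℝ} (ha : ∀ i, StrictMono (a i))
    {s : Fin d → Fin (n+1) → ℝ} (hs : s ∈ Qset d n a) (i : Fin d) {k : ℕ} (hk : k < n) :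
    0 ≤ mu d n a s i k :=
  div_nonneg ((s_mem_Ci ha hs i).2.1 k hk) (le_of_lt (da_pos ha i hk))

lemma mu_le_one {d n : ℕ} {a : Fin d → Fin (n+1) → ℝ} (ha : ∀ i, StrictMono (a i))
    {s : Fin d → Fin (n+1) → ℝ} (hs : s ∈ Qset d n a) (i : Fin d) {k : ℕ} (hk : k < n) :
    mu d n a s i k ≤ 1 :=
  (div_le_one (da_pos ha i hk)).mpr ((s_mem_Ci ha hs i).2.2.1 k hk)

lemma mu_anti_succ {d n : ℕ} {a : Fin d → Fin (n+1) → ℝ} (ha : ∀ i, StrictMono (a i))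
    {s : Fin d → Fin (n+1) → ℝ} (hs : s ∈ Qset d n a) (i : Fin d) {k : ℕ} (hk : k + 1 < n) :
    mu d n a s i (k+1) ≤ mu d n a s i k := by
  have h := (s_mem_Ci ha hs i).2.2.2 k hk
  unfold mu
  rw [div_le_div_iff₀ (da_pos ha i hk) (da_pos ha i (by omega))]
  calc (s i (toIdx n (k+1+1)) - s i (toIdx n (k+1))) * (a i (toIdx n (k+1)) - a i (toIdx n k))
      = (s i (toIdx n (k+2)) - s i (toIdx n (k+1))) * (a i (toIdx n (k+1)) - a i (toIdx n k)) := by norm_num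
    _ ≤ (s i (toIdx n (k+1)) - s i (toIdx n k)) * (a i (toIdx n (k+2)) - a i (toIdx n (k+1))) := h
    _ = (s i (toIdx n (k+1)) - s i (toIdx n k)) * (a i (toIdx n (k+1+1)) - a i (toIdx n (k+1))) := by norm_num

lemma mu_anti {d n : ℕ} {a : Fin d → Fin (n+1) → ℝ} (ha : ∀ i, StrictMono (a i))
    {s : Fin d → Fin (n+1) → ℝ} (hs : s ∈ Qset d n a) (i : Fin d) {k k' : ℕ}
    (hkk : k ≤ k') (hk' : k' < n) : mu d n a s i k' ≤ mu d n a s i k := by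
  induction k' with
  | zero => simp_all
  | succ m ih =>
    rcases Nat.lt_succ_iff_lt_or_eq.mp (Nat.lt_succ_of_le hkk) with h | h
    · exact le_trans (mu_anti_succ ha hs i hk') (ih (by omega) (by omega))
    · subst h; rfl

lemma mu_spec {d n : ℕ} {a : Fin d → Fin (n+1) → ℝ} (ha : ∀ i, StrictMono (a i))
    (s : Fin d → Fin (n+1) → ℝ) (i : Fin d) {k : ℕ} (hk : k < n) :
    s i (toIdx n (k+1)) - s i (toIdx n k)
      = mu d n a s i k * (a i (toIdx n (k+1)) - a i (toIdx n k)) := by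
  unfold mu
  rw [div_mul_cancel₀ _ (ne_of_gt (da_pos ha i hk))]

lemma s_eq {d n : ℕ} {a : Fin d → Fin (n+1) → ℝ} (ha : ∀ i, StrictMono (a i))
    {s : Fin d → Fin (n+1) → ℝ} (hs : s ∈ Qset d n a) (i : Fin d) {K : ℕ} (hK : K ≤ n) :
    s i (toIdx n K) = a i 0 + ∑ k ∈ Finset.range K,
      mu d n a s i k * (a i (toIdx n (k+1)) - a i (toIdx n k)) := by
  have tele : ∑ k ∈ Finset.range K, (s i (toIdx n (k+1)) - s i (toIdx n k))
      = s i (toIdx n K) - s i (toIdx n 0) := Finset.sum_range_sub (fun k => s i (toIdx n k)) K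
  have hsum : ∑ k ∈ Finset.range K, (s i (toIdx n (k+1)) - s i (toIdx n k))
      = ∑ k ∈ Finset.range K, mu d n a s i k * (a i (toIdx n (k+1)) - a i (toIdx n k)) := by
    apply Finset.sum_congr rfl
    intro k hk
    exact mu_spec ha s i (lt_of_lt_of_le (Finset.mem_range.mp hk) hK)
  rw [← hsum, tele, toIdx_zero, s_zero ha hs i]
  ring

lemma toIdx_fin {n : ℕ} (j : Fin (n+1)) : toIdx n (j : ℕ) = j :=
  Fin.ext (toIdx_val (Nat.lt_succ_iff.mp j.isLt))

lemma Bhat_eq (d n : ℕ) (φ : (Fin d → ℝ) → ℝ) (a s : Fin d → Fin (n+1) → ℝ)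
    {ω : Fin (d*n) → Fin d} (hω : IsDirVec d n ω) :
    Bhat d n φ ω a s = gg d n φ a (gridPt d n ω 0)
      + ∑ t : Fin (d*n),
          (gg d n φ a (gridPt d n ω ((t:ℕ)+1)) - gg d n φ a (gridPt d n ω (t:ℕ)))
            * mu d n a s (ω t) (gridPt d n ω (t:ℕ) (ω t)) := by
  unfold Bhat gg
  congr 1
  apply Finset.sum_congr rfl
  intro t _
  have hstep : gridPt d n ω ((t:ℕ)+1) (ω t) = gridPt d n ω (t:ℕ) (ω t) + 1 := by
    rw [gridPt_succ d n ω t (ω t)]; simp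
  rw [hstep]
  unfold mu
  rw [div_mul_eq_mul_div, mul_div_assoc]

lemma dominate (d n : ℕ) (φ : (Fin d → ℝ) → ℝ) (a : Fin d → Fin (n+1) → ℝ)
    (ha : ∀ i, StrictMono (a i))
    (hsuper : ∀ y ∈ Set.Icc (fun i => a i 0) (fun i => a i (Fin.last n)),
      ∀ z ∈ Set.Icc (fun i => a i 0) (fun i => a i (Fin.last n)),
        φ y + φ z ≤ φ (y ⊔ z) + φ (y ⊓ z))
    {ω : Fin (d*n) → Fin d} (hω : IsDirVec d n ω)
    (J : Fin d → ℕ) (hJ : ∀ i, J i ≤ n) :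
    gg d n φ a J ≤ gg d n φ a (gridPt d n ω 0)
      + ∑ t : Fin (d*n),
          (gg d n φ a (gridPt d n ω ((t:ℕ)+1)) - gg d n φ a (gridPt d n ω (t:ℕ)))
            * (if gridPt d n ω (t:ℕ) (ω t) < J (ω t) then (1:ℝ) else 0) := by
  set q : ℕ → Fin d → ℕ := fun t i => min (gridPt d n ω t i) (J i) with hqdef
  have key : ∀ t : Fin (d*n),
      gg d n φ a (q ((t:ℕ)+1)) - gg d n φ a (q (t:ℕ)) ≤
      (gg d n φ a (gridPt d n ω ((t:ℕ)+1)) - gg d n φ a (gridPt d n ω (t:ℕ)))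
        * (if gridPt d n ω (t:ℕ) (ω t) < J (ω t) then (1:ℝ) else 0) := by
    intro t
    by_cases h : gridPt d n ω (t:ℕ) (ω t) < J (ω t)
    · rw [if_pos h, mul_one]
      have hsup : (fun i => max (gridPt d n ω (t:ℕ) i) (q ((t:ℕ)+1) i))
          = gridPt d n ω ((t:ℕ)+1) := by
        funext i
        simp only [hqdef]
        rw [gridPt_succ d n ω t i]
        by_cases hi : ω t = i
        · rw [if_pos hi, ← hi]; omega
        · rw [if_neg hi]; omega
      have hinf : (fun i => min (gridPt d n ω (t:ℕ) i) (q ((t:ℕ)+1) i))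
          = q (t:ℕ) := by
        funext i
        simp only [hqdef]
        rw [gridPt_succ d n ω t i]
        by_cases hi : ω t = i
        · rw [if_pos hi, ← hi]; omega
        · rw [if_neg hi]; omega
      have h2 := gg_super d n a ha φ hsuper (gridPt d n ω (t:ℕ)) (q ((t:ℕ)+1))
      rw [hsup, hinf] at h2
      linarith
    · rw [if_neg h, mul_zero]
      have hq2 : q ((t:ℕ)+1) = q (t:ℕ) := by
        funext i
        simp only [hqdef]
        rw [gridPt_succ d n ω t i]
        by_cases hi : ω t = i
        · rw [if_pos hi, ← hi]; omega
        · rw [if_neg hi]; omega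
      rw [hq2, sub_self]
  have tele : ∑ t : Fin (d*n), (gg d n φ a (q ((t:ℕ)+1)) - gg d n φ a (q (t:ℕ)))
      = gg d n φ a (q (d*n)) - gg d n φ a (q 0) := by
    rw [Fin.sum_univ_eq_sum_range (fun t => gg d n φ a (q (t+1)) - gg d n φ a (q t)) (d*n)]
    exact Finset.sum_range_sub (fun t => gg d n φ a (q t)) (d*n)
  have hqend : q (d*n) = J := by
    funext i
    simp only [hqdef]
    rw [gridPt_total d n hω i]
    have := hJ i; omega
  have hq0 : q 0 = gridPt d n ω 0 := by
    funext i
    simp only [hqdef]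
    rw [gridPt_zero]
    omega
  have hsum := Finset.sum_le_sum (fun t (_ : t ∈ Finset.univ) => key t)
  rw [tele, hqend, hq0] at hsum
  linarith

lemma claimB (d n : ℕ) (φ : (Fin d → ℝ) → ℝ) (a : Fin d → Fin (n+1) → ℝ)
    (ha : ∀ i, StrictMono (a i))
    (hsuper : ∀ y ∈ Set.Icc (fun i => a i 0) (fun i => a i (Fin.last n)),
      ∀ z ∈ Set.Icc (fun i => a i 0) (fun i => a i (Fin.last n)),
        φ y + φ z ≤ φ (y ⊔ z) + φ (y ⊓ z))
    {ω : Fin (d*n) → Fin d} (hω : IsDirVec d n ω)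
    {s : Fin d → Fin (n+1) → ℝ} (hs : s ∈ Qset d n a)
    {r : ℝ}
    (hr : ∃ (m : ℕ) (lam : Fin m → ℝ) (y : Fin m → (Fin d → Fin (n+1) → ℝ)),
      (∀ idx, 0 ≤ lam idx) ∧ ∑ idx, lam idx = 1 ∧ (∀ idx, y idx ∈ vertQ d n a) ∧
      ∑ idx, lam idx • y idx = s ∧ r = ∑ idx, lam idx * phibar d n φ (y idx)) :
    r ≤ Bhat d n φ ω a s := by
  obtain ⟨m, lam, y, hlam0, hlam1, hyV, hsum, hrval⟩ := hr
  -- extract grid points of the vertices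
  have hchoose : ∀ idx i, y idx i = vvec d n a i ((hyV idx) i).choose :=
    fun idx i => ((hyV idx) i).choose_spec
  set J : Fin m → Fin d → ℕ := fun idx i => (((hyV idx) i).choose : ℕ) with hJdef
  have hJle : ∀ idx i, J idx i ≤ n := fun idx i => Nat.lt_succ_iff.mp (((hyV idx) i).choose.isLt)
  -- phibar of vertex = gg of its grid point
  have hval : ∀ idx, phibar d n φ (y idx) = gg d n φ a (J idx) := by
    intro idx
    unfold phibar gg
    congr 1
    funext i
    rw [hchoose idx i]
    unfold vvec
    rw [min_eq_left (Fin.le_last _), hJdef]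
    rw [toIdx_fin]
    rfl
  -- marginal identity
  have hmarg : ∀ (i : Fin d) (k : ℕ), k < n →
      ∑ idx, lam idx * (if k < J idx i then (1:ℝ) else 0) = mu d n a s i k := by
    intro i k hk
    have happ : ∀ κ : Fin (n+1), ∑ idx, lam idx * y idx i κ = s i κ := by
      intro κ
      have h1 := congrFun (congrFun hsum i) κ
      rw [← h1]
      rw [Finset.sum_apply, Finset.sum_apply]
      apply Finset.sum_congr rfl
      intro idx _
      simp [Pi.smul_apply]
    have hdiff : ∑ idx, lam idx * (y idx i (toIdx n (k+1)) - y idx i (toIdx n k))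
        = mu d n a s i k * (a i (toIdx n (k+1)) - a i (toIdx n k)) := by
      rw [← mu_spec ha s i hk]
      simp only [mul_sub]
      rw [Finset.sum_sub_distrib, happ, happ]
    have hterm : ∀ idx, y idx i (toIdx n (k+1)) - y idx i (toIdx n k)
        = (if k < J idx i then (1:ℝ) else 0) * (a i (toIdx n (k+1)) - a i (toIdx n k)) := by
      intro idx
      rw [hchoose idx i, vvec_diff a i _ hk]
      have hco : (((hyV idx) i).choose : ℕ) = J idx i := rfl
      rw [hco]
      by_cases hc : k < J idx i
      · rw [if_pos hc, if_pos hc, one_mul]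
      · rw [if_neg hc, if_neg hc, zero_mul]
    have hD : a i (toIdx n (k+1)) - a i (toIdx n k) ≠ 0 := ne_of_gt (da_pos ha i hk)
    apply mul_right_cancel₀ hD
    rw [← hdiff]
    rw [Finset.sum_mul]
    apply Finset.sum_congr rfl
    intro idx _
    rw [hterm idx]
    ring
  -- rewrite Bhat and conclude
  rw [Bhat_eq d n φ a s hω]
  have hswap : gg d n φ a (gridPt d n ω 0)
      + ∑ t : Fin (d*n),
          (gg d n φ a (gridPt d n ω ((t:ℕ)+1)) - gg d n φ a (gridPt d n ω (t:ℕ)))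
            * mu d n a s (ω t) (gridPt d n ω (t:ℕ) (ω t))
      = ∑ idx, lam idx * (gg d n φ a (gridPt d n ω 0)
          + ∑ t : Fin (d*n),
              (gg d n φ a (gridPt d n ω ((t:ℕ)+1)) - gg d n φ a (gridPt d n ω (t:ℕ)))
                * (if gridPt d n ω (t:ℕ) (ω t) < J idx (ω t) then (1:ℝ) else 0)) := by
    have hmu : ∀ t : Fin (d*n), mu d n a s (ω t) (gridPt d n ω (t:ℕ) (ω t))
        = ∑ idx, lam idx * (if gridPt d n ω (t:ℕ) (ω t) < J idx (ω t) then (1:ℝ) else 0) :=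
      fun t => (hmarg (ω t) _ (gridPt_lt d n hω t)).symm
    calc gg d n φ a (gridPt d n ω 0)
        + ∑ t : Fin (d*n),
            (gg d n φ a (gridPt d n ω ((t:ℕ)+1)) - gg d n φ a (gridPt d n ω (t:ℕ)))
              * mu d n a s (ω t) (gridPt d n ω (t:ℕ) (ω t))
        = (∑ idx, lam idx * gg d n φ a (gridPt d n ω 0))
          + ∑ t : Fin (d*n), ∑ idx, lam idx *
              ((gg d n φ a (gridPt d n ω ((t:ℕ)+1)) - gg d n φ a (gridPt d n ω (t:ℕ)))
                * (if gridPt d n ω (t:ℕ) (ω t) < J idx (ω t) then (1:ℝ) else 0)) := by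
          congr 1
          · rw [← Finset.sum_mul, hlam1, one_mul]
          · apply Finset.sum_congr rfl
            intro t _
            rw [hmu t, Finset.mul_sum]
            apply Finset.sum_congr rfl
            intro idx _
            ring
      _ = ∑ idx, lam idx * (gg d n φ a (gridPt d n ω 0)
            + ∑ t : Fin (d*n),
                (gg d n φ a (gridPt d n ω ((t:ℕ)+1)) - gg d n φ a (gridPt d n ω (t:ℕ)))
                  * (if gridPt d n ω (t:ℕ) (ω t) < J idx (ω t) then (1:ℝ) else 0)) := by
          rw [Finset.sum_comm]
          rw [← Finset.sum_add_distrib]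
          apply Finset.sum_congr rfl
          intro idx _
          rw [mul_add, Finset.mul_sum]
  rw [hswap, hrval]
  apply Finset.sum_le_sum
  intro idx _
  rw [hval idx]
  exact mul_le_mul_of_nonneg_left
    (dominate d n φ a ha hsuper hω (J idx) (hJle idx)) (hlam0 idx)

-- ### The sorted direction vector (Claim C machinery)

section Sorted

variable (d n : ℕ) (key : Fin d → Fin n → ℝ)

def sortKey : Fin (d*n) → Lex (ℝᵒᵈ × Lex (Fin d × Fin n)) :=
  fun t => toLex (OrderDual.toDual (key (finProdFinEquiv.symm t).1 (finProdFinEquiv.symm t).2),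
                  toLex (finProdFinEquiv.symm t))

def sortedEquiv : Fin (d*n) ≃ (Fin d × Fin n) :=
  (Tuple.sort (sortKey d n key)).trans (finProdFinEquiv.symm)

lemma sortKey_comp (t : Fin (d*n)) :
    sortKey d n key (Tuple.sort (sortKey d n key) t)
      = toLex (OrderDual.toDual (key (sortedEquiv d n key t).1 (sortedEquiv d n key t).2),
          toLex (sortedEquiv d n key t)) := rfl

lemma sortKey_injective : Function.Injective (sortKey d n key) := by
  intro t t' h
  unfold sortKey at h
  have h2 := congrArg (fun x => (ofLex x).2) h
  simp only [ofLex_toLex] at h2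
  have h3 : (finProdFinEquiv.symm t : Fin d × Fin n) = finProdFinEquiv.symm t' := by
    have := congrArg (fun (x : Lex (Fin d × Fin n)) => ofLex x) h2
    simpa using this
  exact finProdFinEquiv.symm.injective h3

lemma sorted_strictMono :
    StrictMono (fun t => sortKey d n key (Tuple.sort (sortKey d n key) t)) :=
  Monotone.strictMono_of_injective (Tuple.monotone_sort (sortKey d n key))
    ((sortKey_injective d n key).comp (Tuple.sort (sortKey d n key)).injective)

/-- The key values are antitone along the sorted enumeration. -/
lemma sorted_key_anti {t t' : Fin (d*n)} (h : t ≤ t') :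
    key (sortedEquiv d n key t').1 (sortedEquiv d n key t').2
      ≤ key (sortedEquiv d n key t).1 (sortedEquiv d n key t).2 := by
  have hm := (Tuple.monotone_sort (sortKey d n key)) h
  rw [Function.comp_apply, Function.comp_apply, sortKey_comp, sortKey_comp,
    Prod.Lex.le_iff] at hm
  rcases hm with h1 | ⟨h1, _⟩
  · exact le_of_lt h1
  · exact le_of_eq (congrArg OrderDual.ofDual h1).symm

/-- Within a row, the sorted enumeration lists the entries in increasing order,
provided each row of the key is antitone. -/
lemma sorted_row_lt (hkey : ∀ i : Fin d, ∀ k k' : Fin n, k ≤ k' → key i k' ≤ key i k)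
    {t t' : Fin (d*n)} (h : t < t')
    (hrow : (sortedEquiv d n key t).1 = (sortedEquiv d n key t').1) :
    (sortedEquiv d n key t).2 < (sortedEquiv d n key t').2 := by
  set e := sortedEquiv d n key with he
  have hne : e t ≠ e t' := fun hc => absurd (e.injective hc) (ne_of_lt h)
  have hm0 := sorted_strictMono d n key h
  have hm : toLex (OrderDual.toDual (key (e t).1 (e t).2), toLex (e t)) <
      toLex (OrderDual.toDual (key (e t').1 (e t').2), toLex (e t')) := hm0
  rw [Prod.Lex.lt_iff] at hm
  rcases lt_trichotomy (e t).2 (e t').2 with hlt | heq | hgt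
  · exact hlt
  · exact absurd (Prod.ext hrow heq) hne
  · exfalso
    have hk : key (e t).1 (e t).2 ≤ key (e t).1 (e t').2 := hkey _ _ _ (le_of_lt hgt)
    rcases hm with h1 | ⟨h1, h2⟩
    · have h5 : key (e t').1 (e t').2 < key (e t).1 (e t).2 := h1
      rw [hrow] at hk h5
      exact lt_irrefl _ (lt_of_lt_of_le h5 hk)
    · rw [Prod.Lex.lt_iff] at h2
      rcases h2 with h2 | ⟨_, h2⟩
      · have h6 : (e t).1 < (e t').1 := h2
        rw [hrow] at h6
        exact lt_irrefl _ h6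
      · exact absurd h2 (not_lt.mpr (le_of_lt hgt))

/-- The first components of the sorted enumeration form a direction vector. -/
lemma sorted_isDirVec : IsDirVec d n (fun t => (sortedEquiv d n key t).1) := by
  intro i
  set e := sortedEquiv d n key with he
  have : (Finset.univ.filter (fun t => (e t).1 = i)).card
      = (Finset.univ : Finset (Fin n)).card := by
    apply Finset.card_bij (fun t _ => (e t).2)
    · intro t _; exact Finset.mem_univ _
    · intro t1 h1 t2 h2 heq
      simp only [Finset.mem_filter] at h1 h2
      apply e.injective
      exact Prod.ext (h1.2.trans h2.2.symm) heq
    · intro k _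
      refine ⟨e.symm (i, k), ?_, ?_⟩
      · simp only [Finset.mem_filter, Finset.mem_univ, true_and]
        rw [Equiv.apply_symm_apply]
      · rw [Equiv.apply_symm_apply]
  rw [this, Finset.card_univ, Fintype.card_fin]

/-- The grid point of the sorted staircase: at step `t` the active coordinate
has been incremented exactly `(e t).2` times. -/
lemma sorted_gridPt (hkey : ∀ i : Fin d, ∀ k k' : Fin n, k ≤ k' → key i k' ≤ key i k)
    (t : Fin (d*n)) :
    gridPt d n (fun u => (sortedEquiv d n key u).1) (t:ℕ) (sortedEquiv d n key t).1
      = ((sortedEquiv d n key t).2 : ℕ) := by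
  set e := sortedEquiv d n key with he
  unfold gridPt
  have hcard : (Finset.univ.filter
        (fun t' : Fin (d*n) => (t' : ℕ) < (t:ℕ) ∧ (e t').1 = (e t).1)).card
      = (Finset.univ.filter (fun k : Fin n => k < (e t).2)).card := by
    apply Finset.card_bij (fun t' _ => (e t').2)
    · intro t' ht'
      simp only [Finset.mem_filter, Finset.mem_univ, true_and] at ht' ⊢
      exact sorted_row_lt d n key hkey (Fin.lt_def.mpr ht'.1) ht'.2
    · intro t1 h1 t2 h2 heq
      simp only [Finset.mem_filter] at h1 h2
      apply e.injective
      exact Prod.ext (h1.2.2.trans h2.2.2.symm) heq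
    · intro k hk
      simp only [Finset.mem_filter, Finset.mem_univ, true_and] at hk
      refine ⟨e.symm ((e t).1, k), ?_, ?_⟩
      · simp only [Finset.mem_filter, Finset.mem_univ, true_and]
        constructor
        · -- need (e.symm ((e t).1, k) : ℕ) < t
          set t' := e.symm ((e t).1, k) with ht'
          have het' : e t' = ((e t).1, k) := Equiv.apply_symm_apply _ _
          have hne : t' ≠ t := by
            intro hc
            rw [hc] at het'
            have h5 : (e t).2 = k := by rw [het']
            rw [h5] at hk
            exact lt_irrefl _ hk
          rcases lt_or_gt_of_ne hne with hlt | hgt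
          · exact Fin.lt_def.mp hlt
          · exfalso
            have := sorted_row_lt d n key hkey hgt (by rw [het'])
            rw [het'] at this
            exact absurd hk (not_lt.mpr (le_of_lt this))
        · rw [Equiv.apply_symm_apply]
      · rw [Equiv.apply_symm_apply]
  rw [hcard]
  have h : Finset.univ.filter (fun k : Fin n => k < (e t).2) = Finset.Iio (e t).2 := by
    ext x; simp
  rw [h, Fin.card_Iio]

end Sorted

-- ### small summation helpers

lemma abel_sum (N G : ℕ → ℝ) (m : ℕ) :
    ∑ t ∈ Finset.range (m+1), (N t - N (t+1)) * G t
      = N 0 * G 0 - N (m+1) * G m + ∑ t ∈ Finset.range m, N (t+1) * (G (t+1) - G t) := by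
  induction m with
  | zero => simp; ring
  | succ m ih =>
    rw [Finset.sum_range_succ, ih,
      Finset.sum_range_succ (fun t => N (t+1) * (G (t+1) - G t))]
    ring

lemma filter_range_lt (K p : ℕ) (f : ℕ → ℝ) :
    ∑ k ∈ Finset.range K, (if k < p then f k else 0) = ∑ k ∈ Finset.range (min p K), f k := by
  rw [← Finset.sum_filter]
  congr 1
  ext x
  simp only [Finset.mem_filter, Finset.mem_range]
  omega

lemma sum_ite_ge (m r : ℕ) (f : ℕ → ℝ) :
    ∑ u ∈ Finset.range m, (if r ≤ u then f u else 0) = ∑ u ∈ Finset.Ico r m, f u := by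
  rw [← Finset.sum_filter]
  congr 1
  ext x
  simp only [Finset.mem_filter, Finset.mem_range, Finset.mem_Ico]
  omega

lemma tele_Ico (N : ℕ → ℝ) {r m : ℕ} (h : r ≤ m) :
    ∑ u ∈ Finset.Ico r m, (N u - N (u+1)) = N r - N m := by
  rw [Finset.sum_Ico_eq_sub _ h, Finset.sum_range_sub' N, Finset.sum_range_sub' N]
  ring

lemma a_toIdx_eq {d n : ℕ} (a : Fin d → Fin (n+1) → ℝ) (i : Fin d) (M : ℕ) :
    a i (toIdx n M) = a i 0 + ∑ k ∈ Finset.range M, (a i (toIdx n (k+1)) - a i (toIdx n k)) := by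
  rw [Finset.sum_range_sub (fun k => a i (toIdx n k)) M, toIdx_zero]
  ring

-- ### the sorted staircase data

def sKey (d n : ℕ) (a s : Fin d → Fin (n+1) → ℝ) : Fin d → Fin n → ℝ :=
  fun i k => mu d n a s i (k : ℕ)

def sEquiv (d n : ℕ) (a s : Fin d → Fin (n+1) → ℝ) : Fin (d*n) ≃ (Fin d × Fin n) :=
  sortedEquiv d n (sKey d n a s)

def sOmega (d n : ℕ) (a s : Fin d → Fin (n+1) → ℝ) : Fin (d*n) → Fin d :=
  fun u => (sortedEquiv d n (sKey d n a s) u).1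

def sNu (d n : ℕ) (a s : Fin d → Fin (n+1) → ℝ) : ℕ → ℝ :=
  fun u => if h : u < d*n then
      mu d n a s (sEquiv d n a s ⟨u, h⟩).1 ((sEquiv d n a s ⟨u, h⟩).2 : ℕ) else 0

def sN (d n : ℕ) (a s : Fin d → Fin (n+1) → ℝ) : ℕ → ℝ :=
  fun u => if u = 0 then 1 else if u ≤ d*n then sNu d n a s (u-1) else 0

variable {d n : ℕ} {a s : Fin d → Fin (n+1) → ℝ}

lemma sKey_anti (ha : ∀ i, StrictMono (a i)) (hs : s ∈ Qset d n a) :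
    ∀ i : Fin d, ∀ k k' : Fin n, k ≤ k' → sKey d n a s i k' ≤ sKey d n a s i k :=
  fun i k k' hkk => mu_anti ha hs i (Fin.le_def.mp hkk) k'.isLt

lemma sOmega_dirvec : IsDirVec d n (sOmega d n a s) :=
  sorted_isDirVec d n (sKey d n a s)

lemma sNu_nonneg (ha : ∀ i, StrictMono (a i)) (hs : s ∈ Qset d n a) (u : ℕ) :
    0 ≤ sNu d n a s u := by
  unfold sNu
  by_cases h : u < d*n
  · rw [dif_pos h]
    exact mu_nonneg ha hs _ ((sEquiv d n a s ⟨u, h⟩).2).isLt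
  · rw [dif_neg h]

lemma sNu_le_one (ha : ∀ i, StrictMono (a i)) (hs : s ∈ Qset d n a) (u : ℕ) :
    sNu d n a s u ≤ 1 := by
  unfold sNu
  by_cases h : u < d*n
  · rw [dif_pos h]
    exact mu_le_one ha hs _ ((sEquiv d n a s ⟨u, h⟩).2).isLt
  · rw [dif_neg h]; norm_num

lemma sNu_anti (ha : ∀ i, StrictMono (a i)) (hs : s ∈ Qset d n a) {u u' : ℕ} (h : u ≤ u') :
    sNu d n a s u' ≤ sNu d n a s u := by
  unfold sNu
  by_cases h' : u' < d*n
  · have hu : u < d*n := lt_of_le_of_lt h h'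
    rw [dif_pos h', dif_pos hu]
    exact sorted_key_anti d n (sKey d n a s) (show (⟨u, hu⟩ : Fin (d*n)) ≤ ⟨u', h'⟩ from h)
  · rw [dif_neg h']
    by_cases hu : u < d*n
    · rw [dif_pos hu]
      exact mu_nonneg ha hs _ ((sEquiv d n a s ⟨u, hu⟩).2).isLt
    · rw [dif_neg hu]

lemma sN_zero : sN d n a s 0 = 1 := by unfold sN; rw [if_pos rfl]

lemma sN_end : sN d n a s (d*n+1) = 0 := by
  unfold sN
  rw [if_neg (Nat.succ_ne_zero _), if_neg (by omega)]

lemma sN_succ {t : ℕ} (h : t < d*n) : sN d n a s (t+1) = sNu d n a s t := by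
  unfold sN
  rw [if_neg (Nat.succ_ne_zero _), if_pos (by omega)]
  simp

lemma sN_anti (hdn : 1 ≤ d*n) (ha : ∀ i, StrictMono (a i)) (hs : s ∈ Qset d n a) (u : ℕ) :
    sN d n a s (u+1) ≤ sN d n a s u := by
  rcases Nat.eq_zero_or_pos u with rfl | hu
  · rw [sN_zero, sN_succ (by omega)]
    exact sNu_le_one ha hs 0
  · by_cases h1 : u + 1 ≤ d*n
    · rw [sN_succ (by omega)]
      unfold sN
      rw [if_neg (by omega), if_pos (by omega)]
      exact sNu_anti ha hs (by omega)
    · by_cases h2 : u ≤ d*n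
      · unfold sN
        rw [if_neg (by omega), if_neg h1, if_neg (by omega), if_pos h2]
        exact sNu_nonneg ha hs _
      · unfold sN
        rw [if_neg (by omega), if_neg (by omega), if_neg (by omega), if_neg (by omega)]

lemma lam_nonneg (hdn : 1 ≤ d*n) (ha : ∀ i, StrictMono (a i)) (hs : s ∈ Qset d n a) (u : ℕ) :
    0 ≤ sN d n a s u - sN d n a s (u+1) :=
  sub_nonneg.mpr (sN_anti hdn ha hs u)

lemma lam_sum : ∑ u ∈ Finset.range (d*n+1), (sN d n a s u - sN d n a s (u+1)) = 1 := by
  rw [Finset.sum_range_sub' (sN d n a s), sN_zero, sN_end, sub_zero]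

/-- the mu-value used at step `t` of the sorted staircase equals `sNu t`. -/
lemma mu_step (ha : ∀ i, StrictMono (a i)) (hs : s ∈ Qset d n a) (t : Fin (d*n)) :
    mu d n a s (sOmega d n a s t) (gridPt d n (sOmega d n a s) (t:ℕ) (sOmega d n a s t))
      = sNu d n a s (t:ℕ) := by
  have h1 := sorted_gridPt d n (sKey d n a s) (sKey_anti ha hs) t
  unfold sOmega
  rw [h1]
  unfold sNu
  rw [dif_pos t.isLt]
  have : (⟨(t:ℕ), t.isLt⟩ : Fin (d*n)) = t := Fin.eta t t.isLt
  rw [this]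
  rfl

/-- the tail-sum / marginal identity. -/
lemma sTail (hdn : 1 ≤ d*n) (ha : ∀ i, StrictMono (a i)) (hs : s ∈ Qset d n a)
    (i : Fin d) {k : ℕ} (hk : k < n) :
    ∑ u ∈ Finset.range (d*n+1), (sN d n a s u - sN d n a s (u+1)) *
        (if k < gridPt d n (sOmega d n a s) u i then (1:ℝ) else 0)
      = mu d n a s i k := by
  classical
  set τ : Fin (d*n) := (sEquiv d n a s).symm (i, ⟨k, hk⟩) with hτdef
  have heτ : sEquiv d n a s τ = (i, ⟨k, hk⟩) := Equiv.apply_symm_apply _ _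
  have hωτ : sOmega d n a s τ = i := by
    unfold sOmega
    show (sEquiv d n a s τ).1 = i
    rw [heτ]
  have hgτ : gridPt d n (sOmega d n a s) (τ:ℕ) i = k := by
    have h1 := sorted_gridPt d n (sKey d n a s) (sKey_anti ha hs) τ
    have h2 : gridPt d n (sOmega d n a s) (τ:ℕ) (sEquiv d n a s τ).1
        = ((sEquiv d n a s τ).2 : ℕ) := h1
    rw [heτ] at h2
    exact h2
  have hgτ1 : gridPt d n (sOmega d n a s) ((τ:ℕ)+1) i = k + 1 := by
    rw [gridPt_succ d n (sOmega d n a s) τ i, hgτ, hωτ, if_pos rfl]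
  have hiff : ∀ u : ℕ, (k < gridPt d n (sOmega d n a s) u i) ↔ ((τ:ℕ)+1 ≤ u) := by
    intro u
    constructor
    · intro h
      by_contra hc
      have := gridPt_mono d n (sOmega d n a s) (show u ≤ (τ:ℕ) by omega) i
      omega
    · intro h
      have := gridPt_mono d n (sOmega d n a s) h i
      omega
  have hre : ∀ u : ℕ, (sN d n a s u - sN d n a s (u+1)) *
      (if k < gridPt d n (sOmega d n a s) u i then (1:ℝ) else 0)
      = if (τ:ℕ)+1 ≤ u then (sN d n a s u - sN d n a s (u+1)) else 0 := by
    intro u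
    by_cases h : (τ:ℕ)+1 ≤ u
    · rw [if_pos h, if_pos ((hiff u).mpr h), mul_one]
    · rw [if_neg h, if_neg (fun hh => h ((hiff u).mp hh)), mul_zero]
  rw [Finset.sum_congr rfl (fun u _ => hre u), sum_ite_ge,
    tele_Ico (sN d n a s) (by omega), sN_end, sub_zero, sN_succ τ.isLt]
  unfold sNu
  rw [dif_pos τ.isLt]
  have h5 : (⟨(τ:ℕ), τ.isLt⟩ : Fin (d*n)) = τ := Fin.eta τ τ.isLt
  rw [h5, heτ]

/-- recomposition: the staircase vertices recombine to `s`. -/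
lemma sRecompose (hdn : 1 ≤ d*n) (ha : ∀ i, StrictMono (a i)) (hs : s ∈ Qset d n a) :
    ∑ u : Fin (d*n+1), (sN d n a s (u:ℕ) - sN d n a s ((u:ℕ)+1)) •
        (fun i => vvec d n a i (toIdx n (gridPt d n (sOmega d n a s) (u:ℕ) i))) = s := by
  classical
  funext i κ
  rw [Finset.sum_apply, Finset.sum_apply]
  have hterm : ∀ u : ℕ,
      ((sN d n a s u - sN d n a s (u+1)) •
        (fun i => vvec d n a i (toIdx n (gridPt d n (sOmega d n a s) u i)))) i κ
      = (sN d n a s u - sN d n a s (u+1)) *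
          (a i 0 + ∑ k ∈ Finset.range (κ:ℕ),
            (if k < gridPt d n (sOmega d n a s) u i then
              a i (toIdx n (k+1)) - a i (toIdx n k) else 0)) := by
    intro u
    have h1 : ((sN d n a s u - sN d n a s (u+1)) •
        (fun i => vvec d n a i (toIdx n (gridPt d n (sOmega d n a s) u i)))) i κ
        = (sN d n a s u - sN d n a s (u+1)) *
            vvec d n a i (toIdx n (gridPt d n (sOmega d n a s) u i)) κ := rfl
    rw [h1]
    congr 1
    unfold vvec
    have h2 : min (toIdx n (gridPt d n (sOmega d n a s) u i)) κ
        = toIdx n (min (gridPt d n (sOmega d n a s) u i) (κ:ℕ)) := by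
      rw [toIdx_min, toIdx_fin]
    rw [h2, a_toIdx_eq a i, filter_range_lt ((κ:ℕ)) (gridPt d n (sOmega d n a s) u i)
      (fun k => a i (toIdx n (k+1)) - a i (toIdx n k))]
  calc ∑ u : Fin (d*n+1),
        ((sN d n a s (u:ℕ) - sN d n a s ((u:ℕ)+1)) •
          (fun i => vvec d n a i (toIdx n (gridPt d n (sOmega d n a s) (u:ℕ) i)))) i κ
      = ∑ u ∈ Finset.range (d*n+1), (sN d n a s u - sN d n a s (u+1)) *
          (a i 0 + ∑ k ∈ Finset.range (κ:ℕ),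
            (if k < gridPt d n (sOmega d n a s) u i then
              a i (toIdx n (k+1)) - a i (toIdx n k) else 0)) := by
        rw [← Fin.sum_univ_eq_sum_range (fun u => (sN d n a s u - sN d n a s (u+1)) *
          (a i 0 + ∑ k ∈ Finset.range (κ:ℕ),
            (if k < gridPt d n (sOmega d n a s) u i then
              a i (toIdx n (k+1)) - a i (toIdx n k) else 0))) (d*n+1)]
        exact Finset.sum_congr rfl (fun u _ => hterm (u:ℕ))
    _ = (∑ u ∈ Finset.range (d*n+1), (sN d n a s u - sN d n a s (u+1))) * a i 0
        + ∑ k ∈ Finset.range (κ:ℕ), (a i (toIdx n (k+1)) - a i (toIdx n k)) *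
            (∑ u ∈ Finset.range (d*n+1), (sN d n a s u - sN d n a s (u+1)) *
              (if k < gridPt d n (sOmega d n a s) u i then (1:ℝ) else 0)) := by
        rw [Finset.sum_mul]
        simp only [mul_add, Finset.sum_add_distrib]
        congr 1
        simp only [Finset.mul_sum]
        rw [Finset.sum_comm]
        apply Finset.sum_congr rfl
        intro k _
        apply Finset.sum_congr rfl
        intro u _
        by_cases h : k < gridPt d n (sOmega d n a s) u i
        · rw [if_pos h, if_pos h]; ring
        · rw [if_neg h, if_neg h]; ring
    _ = a i 0 + ∑ k ∈ Finset.range (κ:ℕ),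
          mu d n a s i k * (a i (toIdx n (k+1)) - a i (toIdx n k)) := by
        rw [lam_sum, one_mul]
        congr 1
        apply Finset.sum_congr rfl
        intro k hk
        have hkn : k < n := by
          have : (κ:ℕ) ≤ n := Nat.lt_succ_iff.mp κ.isLt
          have := Finset.mem_range.mp hk
          omega
        rw [sTail hdn ha hs i hkn]
        ring
    _ = s i κ := by
        rw [← s_eq ha hs i (Nat.lt_succ_iff.mp κ.isLt), toIdx_fin]

/-- value identity: `Bhat` at the sorted staircase is the convex combination value. -/
lemma sValue (hdn : 1 ≤ d*n) (ha : ∀ i, StrictMono (a i)) (hs : s ∈ Qset d n a)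
    (φ : (Fin d → ℝ) → ℝ) :
    Bhat d n φ (sOmega d n a s) a s
      = ∑ u ∈ Finset.range (d*n+1), (sN d n a s u - sN d n a s (u+1)) *
          gg d n φ a (gridPt d n (sOmega d n a s) u) := by
  rw [Bhat_eq d n φ a s sOmega_dirvec]
  rw [abel_sum (sN d n a s) (fun u => gg d n φ a (gridPt d n (sOmega d n a s) u)) (d*n)]
  rw [sN_zero, sN_end, one_mul, zero_mul, sub_zero]
  congr 1
  rw [← Fin.sum_univ_eq_sum_range (fun t => sN d n a s (t+1) *
    (gg d n φ a (gridPt d n (sOmega d n a s) (t+1)) -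
      gg d n φ a (gridPt d n (sOmega d n a s) t))) (d*n)]
  apply Finset.sum_congr rfl
  intro t _
  rw [mu_step ha hs t, ← sN_succ t.isLt]
  ring

lemma claimC (hdn : 1 ≤ d*n) (ha : ∀ i, StrictMono (a i)) (hs : s ∈ Qset d n a)
    (φ : (Fin d → ℝ) → ℝ) :
    ∃ (k : ℕ) (lam : Fin k → ℝ) (y : Fin k → (Fin d → Fin (n+1) → ℝ)),
      (∀ idx, 0 ≤ lam idx) ∧ ∑ idx, lam idx = 1 ∧ (∀ idx, y idx ∈ vertQ d n a) ∧
      ∑ idx, lam idx • y idx = s ∧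
      Bhat d n φ (sOmega d n a s) a s = ∑ idx, lam idx * phibar d n φ (y idx) := by
  refine ⟨d*n+1, fun u => sN d n a s (u:ℕ) - sN d n a s ((u:ℕ)+1),
    fun u => (fun i => vvec d n a i (toIdx n (gridPt d n (sOmega d n a s) (u:ℕ) i))),
    ?_, ?_, ?_, ?_, ?_⟩
  · intro u; exact lam_nonneg hdn ha hs _
  · rw [Fin.sum_univ_eq_sum_range (fun u => sN d n a s u - sN d n a s (u+1)) (d*n+1)]
    exact lam_sum
  · intro u
    intro i
    exact ⟨toIdx n (gridPt d n (sOmega d n a s) (u:ℕ) i), rfl⟩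
  · exact sRecompose hdn ha hs
  · rw [sValue hdn ha hs φ]
    rw [← Fin.sum_univ_eq_sum_range (fun u => (sN d n a s u - sN d n a s (u+1)) *
      gg d n φ a (gridPt d n (sOmega d n a s) u)) (d*n+1)]
    apply Finset.sum_congr rfl
    intro u _
    congr 1
    unfold phibar gg vvec
    congr 1
    funext i
    show a i (toIdx n (gridPt d n (sOmega d n a s) (u:ℕ) i))
        = a i (toIdx n (gridPt d n (sOmega d n a s) (u:ℕ) i) ⊓ Fin.last n)
    rw [inf_eq_left.mpr (Fin.le_last _)]


theorem statement_4
    (d n : ℕ) (hd : 1 ≤ d) (hn : 1 ≤ n)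
    (a : Fin d → Fin (n + 1) → ℝ) (ha : ∀ i, StrictMono (a i))
    (φ : (Fin d → ℝ) → ℝ)
    (hsuper : ∀ y ∈ Set.Icc (fun i => a i 0) (fun i => a i (Fin.last n)),
      ∀ z ∈ Set.Icc (fun i => a i 0) (fun i => a i (Fin.last n)),
        φ y + φ z ≤ φ (y ⊔ z) + φ (y ⊓ z))
    (hext : ∀ s ∈ Qset d n a,
      concEnv (Qset d n a) (phibar d n φ) s = concEnv (vertQ d n a) (phibar d n φ) s) :
    ∀ s ∈ Qset d n a,
      concEnv (Qset d n a) (phibar d n φ) s =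
        sInf {r : ℝ | ∃ ω : Fin (d * n) → Fin d, IsDirVec d n ω ∧ r = Bhat d n φ ω a s} := by
  intro s hs
  have hdn : 1 ≤ d*n := Nat.one_le_iff_ne_zero.mpr (by positivity)
  set Sset : Set ℝ := {r : ℝ | ∃ (k : ℕ) (lam : Fin k → ℝ)
      (y : Fin k → (Fin d → Fin (n+1) → ℝ)),
    (∀ idx, 0 ≤ lam idx) ∧ ∑ idx, lam idx = 1 ∧ (∀ idx, y idx ∈ vertQ d n a) ∧
    ∑ idx, lam idx • y idx = s ∧ r = ∑ idx, lam idx * phibar d n φ (y idx)} with hSdef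
  set Bset : Set ℝ :=
    {r : ℝ | ∃ ω : Fin (d * n) → Fin d, IsDirVec d n ω ∧ r = Bhat d n φ ω a s} with hBdef
  set r0 : ℝ := Bhat d n φ (sOmega d n a s) a s with hr0
  have h0 : r0 ∈ Sset := by
    obtain ⟨k, lam, y, h1, h2, h3, h4, h5⟩ := claimC hdn ha hs φ
    exact ⟨k, lam, y, h1, h2, h3, h4, h5⟩
  have hB0 : r0 ∈ Bset := ⟨sOmega d n a s, sOmega_dirvec, rfl⟩
  have hUB : ∀ r ∈ Sset, ∀ b ∈ Bset, r ≤ b := by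
    intro r hr b hb
    obtain ⟨ω, hω, rfl⟩ := hb
    exact claimB d n φ a ha hsuper hω hs hr
  have hSne : Sset.Nonempty := ⟨r0, h0⟩
  have hBne : Bset.Nonempty := ⟨r0, hB0⟩
  have hSbdd : BddAbove Sset := ⟨r0, fun r hr => hUB r hr r0 hB0⟩
  have hBbdd : BddBelow Bset := ⟨r0, fun b hb => hUB r0 h0 b hb⟩
  rw [hext s hs]
  have hconc : concEnv (vertQ d n a) (phibar d n φ) s = sSup Sset := rfl
  rw [hconc]
  apply le_antisymm
  · exact csSup_le hSne (fun r hr => le_csInf hBne (fun b hb => hUB r hr b hb))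
  · exact le_trans (csInf_le hBbdd hB0) (le_csSup hSbdd h0)
end
end

section
/- Let φ : [0,1]^d → ℝ be concave-extendable from {0,1}^d and supermodular when restricted to {0,1}^d (i.e., φ(y ∨ z) + φ(y ∧ z) ≥ φ(y) + φ(z) for all y, z ∈ {0,1}^d, with componentwise maximum and minimum). For a permutation ω of {1,…,d} define φ̂^ω(f) := φ(0) + Σ_{i=1}^d ( φ(Σ_{j=1}^{i} e_{ω_j}) − φ(Σ_{j=1}^{i−1} e_{ω_j}) ) f_{ω_i}, where e_i is the i-th standard unit vector. Then for every f ∈ [0,1]^d, conc_{[0,1]^d}(φ)(f) = min_ω φ̂^ω(f), the minimum over all permutations ω of {1,…,d}. -/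
noncomputable section

/-- The vertices `{0,1}^d` of the unit hypercube. -/
def corners (d : ℕ) : Set (Fin d → ℝ) := {y | ∀ i, y i = 0 ∨ y i = 1}

/-- The Lovász-extension value `φ̂^ω(f)` associated with a permutation `ω`. -/
def lovaszVal (d : ℕ) (φ : (Fin d → ℝ) → ℝ) (ω : Equiv.Perm (Fin d)) (f : Fin d → ℝ) : ℝ :=
  φ 0 + ∑ i : Fin d,
    (φ (fun k => if ω.symm k ≤ i then (1 : ℝ) else 0) -
      φ (fun k => if ω.symm k < i then (1 : ℝ) else 0)) * f (ω i)


/-!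
Fix a permutation `ω` and its chain of corners `0 = C₀ ≤ C₁ ≤ ⋯ ≤ C_d = 1`, where `C_i` is the
indicator of `{ω 0, …, ω (i-1)}`. For a corner `y`, supermodularity applied to `y ⊓ C_{i+1}` and
`C_i` bounds the increment `φ (y ⊓ C_{i+1}) - φ (y ⊓ C_i)` by `(φ C_{i+1} - φ C_i) * y (ω i)`;
telescoping gives `φ ≤ φ̂^ω` on the corners, and as `φ̂^ω` is affine, every convex combination of
corner values representing `f` is at most `φ̂^ω f`. Conversely, if `ω` sorts `f` decreasingly,
then `f = ∑ (f (ω (i-1)) - f (ω i)) • C_i` (with `f (ω (-1)) = 1`, `f (ω d) = 0`) is such a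
combination, and by Abel summation its value is exactly `φ̂^ω f`. Hence the supremum defining the
envelope over `{0,1}^d` is attained and equals `min_ω φ̂^ω f`.
-/

open Finset

def convexCombValues {E : Type*} [AddCommMonoid E] [Module ℝ E] (S : Set E) (g : E → ℝ)
    (x : E) : Set ℝ :=
  {r : ℝ | ∃ (k : ℕ) (lam : Fin k → ℝ) (y : Fin k → E),
    (∀ idx, 0 ≤ lam idx) ∧ ∑ idx, lam idx = 1 ∧ (∀ idx, y idx ∈ S) ∧
    ∑ idx, lam idx • y idx = x ∧ r = ∑ idx, lam idx * g (y idx)}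

theorem concEnv_eq_sSup_convexCombValues {E : Type*} [AddCommMonoid E] [Module ℝ E]
    (S : Set E) (g : E → ℝ) (x : E) : concEnv S g x = sSup (convexCombValues S g x) :=
  rfl

def SupermodularOn {α : Type*} [Lattice α] (S : Set α) (φ : α → ℝ) : Prop :=
  ∀ y ∈ S, ∀ z ∈ S, φ y + φ z ≤ φ (y ⊔ z) + φ (y ⊓ z)

variable {d : ℕ}

theorem corners_subset_Icc : corners d ⊆ Set.Icc 0 1 := fun y hy =>
  ⟨fun k => by rcases hy k with h | h <;> simp [h],
    fun k => by rcases hy k with h | h <;> simp [h]⟩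

theorem inf_mem_corners {y z : Fin d → ℝ} (hy : y ∈ corners d) (hz : z ∈ corners d) :
    y ⊓ z ∈ corners d := fun k => by
  rcases hy k with h | h <;> rcases hz k with h' | h' <;> simp [h, h']

def chainCorner (ω : Equiv.Perm (Fin d)) (i : ℕ) : Fin d → ℝ :=
  fun k => if (ω.symm k : ℕ) < i then 1 else 0

section chainCorner

variable (ω : Equiv.Perm (Fin d))

@[simp]
theorem chainCorner_apply_perm (i : ℕ) (m : Fin d) :
    chainCorner ω i (ω m) = if (m : ℕ) < i then 1 else 0 := by
  simp [chainCorner]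

theorem chainCorner_mem_corners (i : ℕ) : chainCorner ω i ∈ corners d := fun k => by
  unfold chainCorner; split_ifs <;> simp

@[simp]
theorem chainCorner_zero : chainCorner ω 0 = 0 :=
  funext fun _ => if_neg (Nat.not_lt_zero _)

theorem chainCorner_self : chainCorner ω d = 1 :=
  funext fun k => if_pos (ω.symm k).isLt

theorem chainCorner_mono : Monotone (chainCorner ω) := fun i j hij k => by
  unfold chainCorner; split_ifs <;> first | omega | norm_num

theorem inf_chainCorner_succ_inf (y : Fin d → ℝ) (n : ℕ) :
    (y ⊓ chainCorner ω (n + 1)) ⊓ chainCorner ω n = y ⊓ chainCorner ω n := by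
  rw [inf_assoc, inf_eq_right.2 (chainCorner_mono ω n.le_succ)]

theorem chainCorner_succ_apply_sub (i m : Fin d) :
    chainCorner ω (i + 1) (ω m) - chainCorner ω i (ω m) = if i = m then 1 else 0 := by
  simp only [chainCorner_apply_perm, Fin.ext_iff]
  split_ifs <;> first | omega | norm_num

theorem lovaszVal_eq_sum_chainCorner (φ : (Fin d → ℝ) → ℝ) (f : Fin d → ℝ) :
    lovaszVal d φ ω f =
      φ 0 + ∑ i : Fin d, (φ (chainCorner ω (i + 1)) - φ (chainCorner ω i)) * f (ω i) := by
  have hle (i : Fin d) :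
      (fun k => if ω.symm k ≤ i then (1 : ℝ) else 0) = chainCorner ω (i + 1) :=
    funext fun k => if_congr (by rw [Fin.le_def]; omega) rfl rfl
  have hlt (i : Fin d) : (fun k => if ω.symm k < i then (1 : ℝ) else 0) = chainCorner ω i :=
    funext fun k => if_congr Fin.lt_def rfl rfl
  simp only [lovaszVal, hle, hlt]

theorem lovaszVal_sum_smul (φ : (Fin d → ℝ) → ℝ) {k : ℕ} (lam : Fin k → ℝ)
    (hlam : ∑ j, lam j = 1) (y : Fin k → Fin d → ℝ) :
    lovaszVal d φ ω (∑ j, lam j • y j) = ∑ j, lam j * lovaszVal d φ ω (y j) := by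
  simp only [lovaszVal, Finset.sum_apply, Pi.smul_apply, smul_eq_mul, mul_add, sum_add_distrib,
    ← sum_mul, hlam, one_mul, mul_sum]
  rw [sum_comm]
  exact congrArg _ (sum_congr rfl fun _ _ => sum_congr rfl fun _ _ => by ring)

end chainCorner

section chainCornerInf

variable (ω : Equiv.Perm (Fin d)) {y : Fin d → ℝ} {n : Fin d}

theorem inf_chainCorner_succ_of_apply_eq_zero (hy : y (ω n) = 0) :
    y ⊓ chainCorner ω (n + 1) = y ⊓ chainCorner ω n := by
  funext k
  obtain ⟨m, rfl⟩ := ω.surjective k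
  simp only [Pi.inf_apply, chainCorner_apply_perm]
  rcases lt_trichotomy (m : ℕ) n with h | h | h
  · rw [if_pos (by omega), if_pos h]
  · rw [Fin.ext h, hy, if_pos (by omega), if_neg (by omega)]; simp
  · rw [if_neg (by omega), if_neg (by omega)]

theorem inf_chainCorner_succ_sup_of_apply_eq_one (hy : y (ω n) = 1) :
    (y ⊓ chainCorner ω (n + 1)) ⊔ chainCorner ω n = chainCorner ω (n + 1) := by
  funext k
  obtain ⟨m, rfl⟩ := ω.surjective k
  simp only [Pi.sup_apply, Pi.inf_apply, chainCorner_apply_perm]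
  rcases lt_trichotomy (m : ℕ) n with h | h | h
  · rw [if_pos (by omega), if_pos h]; simp
  · rw [Fin.ext h, hy, if_pos (by omega), if_neg (by omega)]; simp
  · rw [if_neg (by omega), if_neg (by omega)]; simp

end chainCornerInf

namespace SupermodularOn

variable {φ : (Fin d → ℝ) → ℝ}

theorem inf_chainCorner_succ_sub_le (hsuper : SupermodularOn (corners d) φ)
    (ω : Equiv.Perm (Fin d)) {y : Fin d → ℝ} (hy : y ∈ corners d) (n : Fin d) :
    φ (y ⊓ chainCorner ω (n + 1)) - φ (y ⊓ chainCorner ω n) ≤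
      (φ (chainCorner ω (n + 1)) - φ (chainCorner ω n)) * y (ω n) := by
  rcases hy (ω n) with h | h
  · rw [inf_chainCorner_succ_of_apply_eq_zero ω h, h]; simp
  · have := hsuper _ (inf_mem_corners hy (chainCorner_mem_corners ω ((n : ℕ) + 1))) _
      (chainCorner_mem_corners ω n)
    rw [inf_chainCorner_succ_sup_of_apply_eq_one ω h, inf_chainCorner_succ_inf] at this
    rw [h, mul_one]
    linarith

theorem le_lovaszVal (hsuper : SupermodularOn (corners d) φ) (ω : Equiv.Perm (Fin d))
    {y : Fin d → ℝ} (hy : y ∈ corners d) : φ y ≤ lovaszVal d φ ω y := by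
  have htelescope : φ y - φ 0 =
      ∑ i : Fin d, (φ (y ⊓ chainCorner ω (i + 1)) - φ (y ⊓ chainCorner ω i)) := by
    rw [Fin.sum_univ_eq_sum_range
        (fun i => φ (y ⊓ chainCorner ω (i + 1)) - φ (y ⊓ chainCorner ω i)),
      sum_range_sub (fun i => φ (y ⊓ chainCorner ω i)), chainCorner_self, chainCorner_zero,
      inf_eq_left.2 (corners_subset_Icc hy).2, inf_eq_right.2 (corners_subset_Icc hy).1]
  have hsteps := sum_le_sum fun i (_ : i ∈ univ) => hsuper.inf_chainCorner_succ_sub_le ω hy i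
  rw [lovaszVal_eq_sum_chainCorner]
  linarith

theorem le_lovaszVal_of_mem_convexCombValues (hsuper : SupermodularOn (corners d) φ)
    (ω : Equiv.Perm (Fin d)) {f : Fin d → ℝ} {r : ℝ}
    (hr : r ∈ convexCombValues (corners d) φ f) : r ≤ lovaszVal d φ ω f := by
  obtain ⟨k, lam, y, hlam, hsum, hy, rfl, rfl⟩ := hr
  rw [lovaszVal_sum_smul ω φ lam hsum]
  exact sum_le_sum fun j _ => mul_le_mul_of_nonneg_left (hsuper.le_lovaszVal ω (hy j)) (hlam j)

end SupermodularOn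

theorem sum_range_sub_succ_mul (g c : ℕ → ℝ) (n : ℕ) :
    ∑ i ∈ range (n + 1), (g i - g (i + 1)) * c i =
      g 0 * c 0 - g (n + 1) * c n + ∑ i ∈ range n, g (i + 1) * (c (i + 1) - c i) := by
  induction n with
  | zero => simp [sub_mul]
  | succ n ih => rw [sum_range_succ, ih, sum_range_succ]; ring

def sortedLevel (ω : Equiv.Perm (Fin d)) (f : Fin d → ℝ) : ℕ → ℝ
  | 0 => 1
  | i + 1 => if h : i < d then f (ω ⟨i, h⟩) else 0

section sortedLevel

variable (ω : Equiv.Perm (Fin d)) (f : Fin d → ℝ)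

theorem sum_sortedLevel_sub_mul (c : ℕ → ℝ) :
    ∑ i : Fin (d + 1), (sortedLevel ω f i - sortedLevel ω f (i + 1)) * c i =
      c 0 + ∑ i : Fin d, (c (i + 1) - c i) * f (ω i) := by
  rw [Fin.sum_univ_eq_sum_range (fun i => (sortedLevel ω f i - sortedLevel ω f (i + 1)) * c i),
    sum_range_sub_succ_mul,
    ← Fin.sum_univ_eq_sum_range (fun i => sortedLevel ω f (i + 1) * (c (i + 1) - c i))]
  simp [sortedLevel, mul_comm]

theorem antitone_sortedLevel (hω : Antitone (f ∘ ω)) (hf : f ∈ Set.Icc 0 1) :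
    Antitone (sortedLevel ω f) := by
  refine antitone_nat_of_succ_le fun i => ?_
  rcases i with _ | i
  · simp only [sortedLevel]
    split_ifs
    exacts [hf.2 _, zero_le_one]
  · simp only [sortedLevel]
    split_ifs with h₁ h₂
    · exact hω (Fin.mk_le_mk.2 i.le_succ)
    · omega
    · exact hf.1 _
    · exact le_rfl

end sortedLevel

theorem exists_lovaszVal_mem_convexCombValues (φ : (Fin d → ℝ) → ℝ) {f : Fin d → ℝ}
    (hf : f ∈ Set.Icc 0 1) :
    ∃ ω : Equiv.Perm (Fin d), lovaszVal d φ ω f ∈ convexCombValues (corners d) φ f := by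
  set ω := Tuple.sort (-f)
  have hω : Antitone (f ∘ ω) := fun i j hij => by
    simpa using Tuple.monotone_sort (-f) hij
  set L := sortedLevel ω f
  refine ⟨ω, d + 1, fun i => L i - L (i + 1), fun i => chainCorner ω i,
    fun i => sub_nonneg.2 (antitone_sortedLevel ω f hω hf (Nat.le_succ _)), ?_,
    fun i => chainCorner_mem_corners ω i, ?_, ?_⟩
  · simpa using sum_sortedLevel_sub_mul ω f fun _ => 1
  · funext k
    obtain ⟨m, rfl⟩ := ω.surjective k
    simp only [Finset.sum_apply, Pi.smul_apply, smul_eq_mul]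
    rw [sum_sortedLevel_sub_mul ω f fun i => chainCorner ω i (ω m)]
    simp only [chainCorner_zero, Pi.zero_apply, zero_add, chainCorner_succ_apply_sub, ite_mul,
      one_mul, zero_mul, sum_ite_eq', mem_univ, if_true]
  · rw [sum_sortedLevel_sub_mul ω f fun i => φ (chainCorner ω i), lovaszVal_eq_sum_chainCorner,
      chainCorner_zero]

theorem statement_6
    (d : ℕ) (φ : (Fin d → ℝ) → ℝ)
    (hsuper : ∀ y ∈ corners d, ∀ z ∈ corners d, φ y + φ z ≤ φ (y ⊔ z) + φ (y ⊓ z))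
    (hext : ∀ f ∈ Set.Icc (0 : Fin d → ℝ) 1,
      concEnv (Set.Icc (0 : Fin d → ℝ) 1) φ f = concEnv (corners d) φ f) :
    ∀ f ∈ Set.Icc (0 : Fin d → ℝ) 1,
      concEnv (Set.Icc (0 : Fin d → ℝ) 1) φ f =
        sInf {r : ℝ | ∃ ω : Equiv.Perm (Fin d), r = lovaszVal d φ ω f} := by
  have hsm : SupermodularOn (corners d) φ := hsuper
  intro f hf
  obtain ⟨ω₀, hω₀⟩ := exists_lovaszVal_mem_convexCombValues φ hf
  have hmax : IsGreatest (convexCombValues (corners d) φ f) (lovaszVal d φ ω₀ f) :=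
    ⟨hω₀, fun _ hr => hsm.le_lovaszVal_of_mem_convexCombValues ω₀ hr⟩
  have hmin : IsLeast {r | ∃ ω : Equiv.Perm (Fin d), r = lovaszVal d φ ω f}
      (lovaszVal d φ ω₀ f) := by
    refine ⟨⟨ω₀, rfl⟩, ?_⟩
    rintro _ ⟨ω, rfl⟩
    exact hsm.le_lovaszVal_of_mem_convexCombValues ω hω₀
  rw [hext f hf, concEnv_eq_sSup_convexCombValues, hmax.csSup_eq, hmin.csInf_eq]
end
end
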